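/- With Δ, x₀, η = 2/(n+γ), and v(x) = -(x₀x₁⋯xₙ)^η as above: v is convex on Δ if and only if γ ≥ n. -/

import Mathlib

/-!
The map `x ↦ (x₀, x₁, …, xₙ)` sends `Δ` affinely onto the open standard simplex of `ℝⁿ⁺¹`.
There `(∏ yᵢ)^(1/n)` is concave: at each `M` it lies below the affine function
`Y ↦ (∏ Mᵢ)^(1/n) (∑ Yᵢ/Mᵢ - 1)/n`, which touches it at `M`. With `rᵢ = Yᵢ/Mᵢ` this follows from
`∏ rᵢ = (∏ rᵢ^{wᵢ})ⁿ ∏ rᵢ^{Mᵢ}`, `wᵢ = (1 - Mᵢ)/n`, and weighted AM-GM for the weights `w` and `M`.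
Hence if `nη ≤ 1`, i.e. `γ ≥ n`, then `(x₀⋯xₙ)^η = ((x₀⋯xₙ)^(1/n))^(nη)` is concave.
If `p = nη > 1`, then on the diagonal `x = (t, …, t)` we get `(x₀⋯xₙ)^η = t^p (1 - nt)^η`, which
is not concave near `t = 0`: the concavity inequality at `t, 2t`, divided by `t^p`, would give
`(3/2)^p ≥ (1 + 2^p)/2` in the limit `t → 0⁺`, contradicting strict convexity of `s ↦ s^p`.
-/

open Finset Real Set

section Simplex

variable {ι : Type*} [Fintype ι] {n : ℕ}

theorem prod_rpow_inv_le_of_sum_mul_eq_one (hn : 0 < n) (hcard : Fintype.card ι = n + 1)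
    {M r : ι → ℝ} (hM : ∀ i, 0 ≤ M i) (hMs : ∑ i, M i = 1) (hr : ∀ i, 0 < r i)
    (hMr : ∑ i, M i * r i = 1) :
    (∏ i, r i) ^ (n⁻¹ : ℝ) ≤ (∑ i, r i - 1) / n := by
  have hn' : (n : ℝ) ≠ 0 := by positivity
  set w : ι → ℝ := fun i => (1 - M i) / n with hw
  have hw_nonneg : ∀ i, 0 ≤ w i := fun i =>
    div_nonneg (sub_nonneg.2 (hMs ▸ single_le_sum (fun j _ => hM j) (mem_univ i))) n.cast_nonneg
  have hws : ∑ i, w i = 1 := by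
    simp only [hw, ← sum_div, sum_sub_distrib, hMs, sum_const, card_univ, hcard]
    field_simp
    ring
  have hwr : ∑ i, w i * r i = (∑ i, r i - 1) / n := by
    rw [← hMr, ← sum_sub_distrib, sum_div]
    exact sum_congr rfl fun i _ => by simp only [hw]; ring
  have hsplit : ∏ i, r i = (∏ i, r i ^ w i) ^ n * ∏ i, r i ^ M i := by
    rw [← Finset.prod_pow, ← prod_mul_distrib]
    refine prod_congr rfl fun i _ => ?_
    rw [← rpow_natCast, ← rpow_mul (hr i).le, ← rpow_add (hr i)]
    have : w i * n + M i = 1 := by simp only [hw]; field_simp; ring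
    rw [this, rpow_one]
  have hgeom_w : ∏ i, r i ^ w i ≤ (∑ i, r i - 1) / n :=
    hwr ▸ geom_mean_le_arith_mean_weighted univ w r (fun i _ => hw_nonneg i) hws
      (fun i _ => (hr i).le)
  have hgeom_M : ∏ i, r i ^ M i ≤ 1 :=
    hMr ▸ geom_mean_le_arith_mean_weighted univ M r (fun i _ => hM i) hMs
      (fun i _ => (hr i).le)
  have hpos_w : 0 ≤ ∏ i, r i ^ w i := prod_nonneg fun i _ => (rpow_pos_of_pos (hr i) _).le
  have hpos_M : 0 ≤ ∏ i, r i ^ M i := prod_nonneg fun i _ => (rpow_pos_of_pos (hr i) _).le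
  calc (∏ i, r i) ^ (n⁻¹ : ℝ)
      = (∏ i, r i ^ w i) * (∏ i, r i ^ M i) ^ (n⁻¹ : ℝ) := by
        rw [hsplit, mul_rpow (pow_nonneg hpos_w n) hpos_M, pow_rpow_inv_natCast hpos_w hn.ne']
    _ ≤ (∑ i, r i - 1) / n * 1 := by
        gcongr
        exacts [hpos_w.trans hgeom_w, rpow_le_one hpos_M hgeom_M (by positivity)]
    _ = (∑ i, r i - 1) / n := mul_one _

variable (ι) in
def openStdSimplex : Set (ι → ℝ) := {x | (∀ i, 0 < x i) ∧ ∑ i, x i = 1}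

theorem convex_openStdSimplex : Convex ℝ (openStdSimplex ι) := by
  rintro x ⟨hx, hxs⟩ y ⟨hy, hys⟩ a b ha hb hab
  refine ⟨fun i => convex_Ioi (0 : ℝ) (hx i) (hy i) ha hb hab, ?_⟩
  simp only [Pi.add_apply, Pi.smul_apply, smul_eq_mul, sum_add_distrib, ← mul_sum, hxs, hys,
    mul_one, hab]

theorem prod_rpow_inv_le_tangent (hn : 0 < n) (hcard : Fintype.card ι = n + 1) {Y M : ι → ℝ}
    (hY : Y ∈ openStdSimplex ι) (hM : M ∈ openStdSimplex ι) :
    (∏ i, Y i) ^ (n⁻¹ : ℝ) ≤ (∏ i, M i) ^ (n⁻¹ : ℝ) * ((∑ i, Y i / M i - 1) / n) := by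
  have hMr : ∑ i, M i * (Y i / M i) = 1 := by
    rw [← hY.2]; exact sum_congr rfl fun i _ => mul_div_cancel₀ _ (hM.1 i).ne'
  have hprod : ∏ i, Y i = (∏ i, M i) * ∏ i, Y i / M i := by
    rw [← prod_mul_distrib]; exact prod_congr rfl fun i _ => (mul_div_cancel₀ _ (hM.1 i).ne').symm
  have hM₀ : 0 ≤ ∏ i, M i := prod_nonneg fun i _ => (hM.1 i).le
  rw [hprod, mul_rpow hM₀ (prod_nonneg fun i _ => (div_pos (hY.1 i) (hM.1 i)).le)]
  exact mul_le_mul_of_nonneg_left (prod_rpow_inv_le_of_sum_mul_eq_one hn hcard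
    (fun i => (hM.1 i).le) hM.2 (fun i => div_pos (hY.1 i) (hM.1 i)) hMr) (rpow_nonneg hM₀ _)

theorem concaveOn_prod_rpow_inv (hn : 0 < n) (hcard : Fintype.card ι = n + 1) :
    ConcaveOn ℝ (openStdSimplex ι) fun Y => (∏ i, Y i) ^ (n⁻¹ : ℝ) := by
  refine ⟨convex_openStdSimplex, fun Y hY Z hZ a b ha hb hab => ?_⟩
  set M := a • Y + b • Z
  have hM : M ∈ openStdSimplex ι := convex_openStdSimplex hY hZ ha hb hab
  have hsum : a * ((∑ i, Y i / M i - 1) / n) + b * ((∑ i, Z i / M i - 1) / n) = 1 := by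
    have : a * ∑ i, Y i / M i + b * ∑ i, Z i / M i = ∑ i, M i / M i := by
      simp only [mul_sum, ← sum_add_distrib, mul_div_assoc', ← add_div]
      rfl
    rw [sum_congr rfl fun i _ => div_self (hM.1 i).ne', sum_const, card_univ, hcard,
      nsmul_eq_mul, mul_one] at this
    push_cast at this
    field_simp
    linarith
  rw [smul_eq_mul, smul_eq_mul]
  calc a * (∏ i, Y i) ^ (n⁻¹ : ℝ) + b * (∏ i, Z i) ^ (n⁻¹ : ℝ)
      ≤ a * ((∏ i, M i) ^ (n⁻¹ : ℝ) * ((∑ i, Y i / M i - 1) / n))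
        + b * ((∏ i, M i) ^ (n⁻¹ : ℝ) * ((∑ i, Z i / M i - 1) / n)) := by
        gcongr
        exacts [prod_rpow_inv_le_tangent hn hcard hY hM, prod_rpow_inv_le_tangent hn hcard hZ hM]
    _ = (∏ i, M i) ^ (n⁻¹ : ℝ) := by
        linear_combination (∏ i, M i) ^ (n⁻¹ : ℝ) * hsum

end Simplex

theorem ConcaveOn.rpow {E : Type*} [AddCommMonoid E] [Module ℝ E] {s : Set E} {f : E → ℝ}
    (hf : ConcaveOn ℝ s f) (hf₀ : ∀ x ∈ s, 0 ≤ f x) {p : ℝ} (hp₀ : 0 ≤ p) (hp₁ : p ≤ 1) :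
    ConcaveOn ℝ s fun x => f x ^ p :=
  ⟨hf.1, fun x hx y hy _ _ ha hb hab =>
    ((concaveOn_rpow hp₀ hp₁).2 (hf₀ x hx) (hf₀ y hy) ha hb hab).trans <|
      rpow_le_rpow (add_nonneg (mul_nonneg ha (hf₀ x hx)) (mul_nonneg hb (hf₀ y hy)))
        (hf.2 hx hy ha hb hab) hp₀⟩

theorem not_concaveOn_rpow_mul {p a : ℝ} (hp : 1 < p) (ha : 0 < a) {h : ℝ → ℝ}
    (hh : ContinuousAt h 0) (h₀ : 0 < h 0) : ¬ ConcaveOn ℝ (Ioo 0 a) fun t => t ^ p * h t := by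
  intro hconc
  set G : ℝ → ℝ := fun t => (3 / 2) ^ p * h (3 / 2 * t) - (h t + 2 ^ p * h (2 * t)) / 2
  have hG : ∀ t ∈ Ioo 0 (a / 2), 0 ≤ G t := by
    rintro t ⟨ht₀, ht⟩
    have hmid := hconc.2 (⟨ht₀, by linarith⟩ : t ∈ Ioo 0 a)
      (⟨by linarith, by linarith⟩ : 2 * t ∈ Ioo 0 a) (by norm_num : (0 : ℝ) ≤ 1 / 2)
      (by norm_num : (0 : ℝ) ≤ 1 / 2) (by norm_num)
    simp only [smul_eq_mul] at hmid
    rw [show 1 / 2 * t + 1 / 2 * (2 * t) = 3 / 2 * t by ring, mul_rpow (by norm_num) ht₀.le,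
      mul_rpow (by norm_num) ht₀.le] at hmid
    have : 0 ≤ t ^ p * G t := by simp only [G]; linarith
    exact (mul_nonneg_iff_of_pos_left (rpow_pos_of_pos ht₀ p)).1 this
  have hG_cont : ContinuousAt G 0 := by
    have hscale : ∀ c : ℝ, ContinuousAt (fun t => h (c * t)) 0 := fun c =>
      ContinuousAt.comp_of_eq hh (continuousAt_const.mul continuousAt_id) (mul_zero c)
    exact (continuousAt_const.mul (hscale _)).sub
      ((hh.add (continuousAt_const.mul (hscale _))).div_const _)
  have hG₀ : 0 ≤ G 0 :=
    ge_of_tendsto (hG_cont.mono_left nhdsWithin_le_nhds)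
      (Filter.eventually_of_mem (Ioo_mem_nhdsGT (half_pos ha)) hG)
  have hstrict : (3 / 2 : ℝ) ^ p < (1 + 2 ^ p) / 2 := by
    have := (strictConvexOn_rpow hp).2 (mem_Ici.2 zero_le_one) (mem_Ici.2 zero_le_two)
      (by norm_num : (1 : ℝ) ≠ 2) (by norm_num : (0 : ℝ) < 1 / 2) (by norm_num : (0 : ℝ) < 1 / 2)
      (by norm_num)
    norm_num at this
    linarith
  have hG₀_eq : G 0 = h 0 * ((3 / 2) ^ p - (1 + 2 ^ p) / 2) := by simp only [G, mul_zero]; ring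
  linarith [mul_neg_of_pos_of_neg h₀ (sub_neg.2 hstrict)]

section EuclideanSimplex

variable {n : ℕ}

def simplexLift (n : ℕ) : EuclideanSpace ℝ (Fin n) →ᵃ[ℝ] (Fin (n + 1) → ℝ) where
  toFun x := Fin.cons (1 - ∑ i, x i) fun i => x i
  linear :=
    { toFun := fun x => Fin.cons (-∑ i, x i) fun i => x i
      map_add' x y := by
        ext j; cases j using Fin.cases <;> simp [sum_add_distrib, add_comm]
      map_smul' c x := by
        ext j; cases j using Fin.cases <;> simp [mul_sum] }
  map_vadd' x v := by
    ext j
    cases j using Fin.cases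
    · simp only [vadd_eq_add, PiLp.add_apply, sum_add_distrib, Fin.cons_zero, LinearMap.coe_mk,
        AddHom.coe_mk, Pi.vadd_apply']
      ring
    · simp

theorem simplexLift_apply (x : EuclideanSpace ℝ (Fin n)) :
    simplexLift n x = Fin.cons (1 - ∑ i, x i) fun i => x i := rfl

theorem preimage_simplexLift_openStdSimplex :
    simplexLift n ⁻¹' openStdSimplex (Fin (n + 1)) = {x | (∀ i, 0 < x i) ∧ ∑ i, x i < 1} := by
  ext x
  simp [openStdSimplex, simplexLift_apply, Fin.forall_fin_succ, Fin.sum_cons, and_comm]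

theorem concaveOn_rpow_simplex (hn : 0 < n) {η : ℝ} (hη₀ : 0 ≤ η) (hη : n * η ≤ 1) :
    ConcaveOn ℝ {x : EuclideanSpace ℝ (Fin n) | (∀ i, 0 < x i) ∧ ∑ i, x i < 1}
      fun x => ((1 - ∑ i, x i) * ∏ i, x i) ^ η := by
  have hH := (concaveOn_prod_rpow_inv hn (Fintype.card_fin _)).comp_affineMap (simplexLift n)
  rw [preimage_simplexLift_openStdSimplex] at hH
  have hP : ∀ x : EuclideanSpace ℝ (Fin n), ∏ i, simplexLift n x i = (1 - ∑ i, x i) * ∏ i, x i :=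
    fun x => by rw [simplexLift_apply, Fin.prod_cons]
  have hP₀ : ∀ x ∈ {x : EuclideanSpace ℝ (Fin n) | (∀ i, 0 < x i) ∧ ∑ i, x i < 1},
      0 ≤ (1 - ∑ i, x i) * ∏ i, x i := fun x hx =>
    mul_nonneg (by linarith [hx.2]) (prod_nonneg fun i _ => (hx.1 i).le)
  refine (hH.rpow (fun x hx => rpow_nonneg ((hP x).symm ▸ hP₀ x hx) _) (by positivity) hη).congr
    fun x hx => ?_
  simp only [Function.comp_apply, hP]
  rw [← rpow_mul (hP₀ x hx), inv_mul_cancel_left₀ (by positivity)]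

theorem not_concaveOn_rpow_simplex (hn : 0 < n) {η : ℝ} (hη : 1 < n * η) :
    ¬ ConcaveOn ℝ {x : EuclideanSpace ℝ (Fin n) | (∀ i, 0 < x i) ∧ ∑ i, x i < 1}
      fun x => ((1 - ∑ i, x i) * ∏ i, x i) ^ η := by
  intro hconc
  have hn' : (0 : ℝ) < n := by positivity
  set c : EuclideanSpace ℝ (Fin n) := WithLp.toLp 2 fun _ => 1
  have hsub : Set.Ioo 0 (1 / (n : ℝ)) ⊆ LinearMap.toSpanSingleton ℝ _ c ⁻¹'
      {x : EuclideanSpace ℝ (Fin n) | (∀ i, 0 < x i) ∧ ∑ i, x i < 1} := by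
    rintro t ⟨ht₀, ht⟩
    have : n * t < 1 := by rwa [lt_div_iff₀ hn', mul_comm] at ht
    simpa [c] using ⟨fun _ : Fin n => ht₀, this⟩
  have hdiag := (hconc.comp_linearMap (LinearMap.toSpanSingleton ℝ _ c)).subset hsub
    (convex_Ioo _ _)
  refine not_concaveOn_rpow_mul hη (by positivity) (h := fun t => (1 - n * t) ^ η) ?_ (by simp)
    (hdiag.congr fun t ht => ?_)
  · exact ((continuousAt_const.sub (continuousAt_const.mul continuousAt_id)).rpow_const
      (Or.inl (by simp)))
  · obtain ⟨ht₀, ht⟩ := ht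
    have h₁ : 0 ≤ 1 - n * t := by rw [lt_div_iff₀ hn'] at ht; linarith
    simp only [Function.comp_apply, LinearMap.toSpanSingleton_apply, PiLp.smul_apply, smul_eq_mul,
      mul_one, sum_const, card_univ, Fintype.card_fin, nsmul_eq_mul, prod_const, c]
    rw [mul_comm, mul_rpow (pow_nonneg ht₀.le n) h₁, ← rpow_natCast, ← rpow_mul ht₀.le]

end EuclideanSimplex

/-- On the standard open simplex `Δ`, with `x₀ = 1 - Σᵢ xᵢ`, `γ > -n` and
`η = 2/(n+γ)`, the function `v(x) = -(x₀x₁⋯xₙ)^η` is convex on `Δ` iff `γ ≥ n`. -/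
theorem stmt_8 (n : ℕ) (hn : 1 ≤ n) (γ : ℝ) (hγ : -(n : ℝ) < γ)
    (η : ℝ) (hη : η = 2 / ((n : ℝ) + γ))
    (v : EuclideanSpace ℝ (Fin n) → ℝ)
    (hv : ∀ x : EuclideanSpace ℝ (Fin n), v x = -(((1 - ∑ i, x i) * ∏ i, x i) ^ η)) :
    ConvexOn ℝ {x : EuclideanSpace ℝ (Fin n) | (∀ i, 0 < x i) ∧ ∑ i, x i < 1} v
      ↔ (n : ℝ) ≤ γ := by
  have hnγ : 0 < (n : ℝ) + γ := by linarith
  have hnη : (n : ℝ) * η ≤ 1 ↔ (n : ℝ) ≤ γ := by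
    rw [hη, mul_div_assoc', div_le_one hnγ]
    constructor <;> intro <;> linarith
  have hv' : v = -fun x => ((1 - ∑ i, x i) * ∏ i, x i) ^ η := funext hv
  rw [hv', neg_convexOn_iff, ← hnη]
  refine ⟨fun hconc => not_lt.1 fun hlt => not_concaveOn_rpow_simplex hn hlt hconc,
    concaveOn_rpow_simplex hn (hη ▸ by positivity)⟩
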